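/- arXiv:1405.1234 — 7 statements merged into one kernel-verified Lean document; each statement's English description precedes it below -/
import Mathlib

section
/- (Lemma 1, Case 1.) Assume n ≥ 1, β i > 0 for all i, α i ≥ 0 for all i, and P 0 ≤ D, and let s_max = D - P 0 (the offset of the initial assignment, at which the first job completes exactly at the due date and all jobs are on time or tardy). Then for every s > s_max one has F s_max < F s; hence no increase of the completion times beyond the initial assignment can be optimal, and an optimal offset can only be obtained by reducing the completion times or leaving them unchanged. -/
/-!
At the offset `D - P 0` the first job completes exactly at the due date, so every job is on time
or tardy. Delaying the schedule further keeps every job tardy and strictly increases each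
tardiness, which costs `β i > 0` per unit, while the earliness terms stay zero.
-/

lemma earliness_tardiness_lt_of_le_of_lt {α β D a b : ℝ} (hβ : 0 < β) (hDa : D ≤ a)
    (hab : a < b) :
    α * max 0 (D - a) + β * max 0 (a - D) < α * max 0 (D - b) + β * max 0 (b - D) := by
  rw [max_eq_left (by linarith : D - a ≤ 0), max_eq_left (by linarith : D - b ≤ 0),
    max_eq_right (by linarith : 0 ≤ a - D), max_eq_right (by linarith : 0 ≤ b - D)]
  nlinarith

theorem stmt_1_general (n : ℕ) (hn : 0 < n) (P α β : Fin n → ℝ) (D : ℝ)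
    (hP : ∀ i, 0 < P i) (hβ : ∀ i, 0 < β i)
    (C : Fin n → ℝ → ℝ)
    (hC : ∀ i s, C i s = s + ∑ k ∈ Finset.Iic i, P k)
    (F : ℝ → ℝ)
    (hF : ∀ s, F s = ∑ i, (α i * max 0 (D - C i s) + β i * max 0 (C i s - D))) :
    ∀ s, D - P ⟨0, hn⟩ < s → F (D - P ⟨0, hn⟩) < F s := by
  intro s hs
  rw [hF, hF]
  refine Finset.sum_lt_sum_of_nonempty ⟨⟨0, hn⟩, Finset.mem_univ _⟩ fun i _ => ?_
  have hP0_le : P ⟨0, hn⟩ ≤ ∑ k ∈ Finset.Iic i, P k :=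
    Finset.single_le_sum (fun k _ => (hP k).le) (Finset.mem_Iic.2 (Fin.le_def.2 (Nat.zero_le _)))
  refine earliness_tardiness_lt_of_le_of_lt (hβ i) ?_ ?_
  · rw [hC]
    linarith
  · rw [hC, hC]
    linarith

theorem stmt_1 (n : ℕ) (hn : 0 < n) (P α β : Fin n → ℝ) (D : ℝ)
    (hP : ∀ i, 0 < P i) (hβ : ∀ i, 0 < β i) (hα : ∀ i, 0 ≤ α i)
    (hP0 : P ⟨0, hn⟩ ≤ D)
    (C : Fin n → ℝ → ℝ)
    (hC : ∀ i s, C i s = s + ∑ k ∈ Finset.Iic i, P k)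
    (F : ℝ → ℝ)
    (hF : ∀ s, F s = ∑ i, (α i * max 0 (D - C i s) + β i * max 0 (C i s - D))) :
    ∀ s, D - P ⟨0, hn⟩ < s → F (D - P ⟨0, hn⟩) < F s :=
  stmt_1_general n hn P α β D hP hβ C hC F hF
end

section
/- (Lemma 1, Case 2.) Assume n ≥ 1, β i > 0 for all i, and D ≤ P 0, so that in every feasible schedule (start offset s ≥ 0) all jobs are tardy or on time. Then F 0 < F s for every s > 0; that is, the schedule in which the first job starts at time 0 and the jobs are processed consecutively without idle time is the unique optimal feasible compact schedule. -/
open Finset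

/- When the first job cannot finish before the due date, no job of a schedule starting at
`s ≥ 0` is early, so `F` is the affine function `s ↦ ∑ βᵢ (Cᵢ s - D)` on `[0, ∞)`, strictly
increasing because every `βᵢ > 0`. -/

lemma penalty_eq_of_le {a b D c : ℝ} (h : D ≤ c) :
    a * max 0 (D - c) + b * max 0 (c - D) = b * (c - D) := by
  rw [max_eq_left (by linarith), max_eq_right (by linarith)]
  ring

theorem stmt_2 (n : ℕ) (hn : 0 < n) (P α β : Fin n → ℝ) (D : ℝ)
    (hP : ∀ i, 0 < P i) (hβ : ∀ i, 0 < β i)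
    (hD : D ≤ P ⟨0, hn⟩)
    (C : Fin n → ℝ → ℝ)
    (hC : ∀ i s, C i s = s + ∑ k ∈ Finset.Iic i, P k)
    (F : ℝ → ℝ)
    (hF : ∀ s, F s = ∑ i, (α i * max 0 (D - C i s) + β i * max 0 (C i s - D))) :
    ∀ s, 0 < s → F 0 < F s := by
  intro s hs
  have not_early : ∀ t, 0 ≤ t → ∀ i, D ≤ C i t := fun t ht i => by
    have : P ⟨0, hn⟩ ≤ ∑ k ∈ Iic i, P k :=
      single_le_sum (fun k _ => (hP k).le) (mem_Iic.mpr (Nat.zero_le _))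
    rw [hC]
    linarith
  have F_eq : ∀ t, 0 ≤ t → F t = ∑ i, β i * (C i t - D) := fun t ht => by
    rw [hF]
    exact sum_congr rfl fun i _ => penalty_eq_of_le (not_early t ht i)
  rw [F_eq 0 le_rfl, F_eq s hs.le]
  refine sum_lt_sum_of_nonempty ⟨⟨0, hn⟩, mem_univ _⟩ fun i _ => ?_
  have : C i 0 < C i s := by rw [hC, hC]; linarith
  exact mul_lt_mul_of_pos_left (by linarith) (hβ i)
end

section
/- (Lemma: once a left shift worsens the solution, it cannot be improved any further.) Assume α i ≥ 0 and β i ≥ 0 for all i ∈ Fin n. Let t < s' < s be three start offsets such that F s < F s' (shifting the jobs left from offset s to offset s' strictly increased the total penalty). Then F s' < F t; that is, every further left shift yields a strictly larger total penalty than F s'. -/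
/-!
The total penalty `F` is a nonnegative combination of hinge functions `max 0 (±(C i s - D))`,
each the positive part of an affine function of `s`, so `F` is convex in `s`. Writing
`s' = λ t + (1 - λ) s` with `0 < λ < 1`, convexity gives
`F s' ≤ λ F t + (1 - λ) F s < λ F t + (1 - λ) F s'`, hence `F s' < F t`.
-/

open Set

section

variable {𝕜 E β : Type*} [Semiring 𝕜] [PartialOrder 𝕜] [AddCommMonoid E] [AddCommMonoid β]
  [PartialOrder β] [IsOrderedAddMonoid β] [SMul 𝕜 E] [Module 𝕜 β] {s : Set E}

theorem convexOn_sum {ι : Type*} (t : Finset ι) {f : ι → E → β} (hs : Convex 𝕜 s)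
    (hf : ∀ i ∈ t, ConvexOn 𝕜 s (f i)) : ConvexOn 𝕜 s fun x => ∑ i ∈ t, f i x := by
  simpa only [Finset.sum_fn] using
    Finset.sum_induction f (ConvexOn 𝕜 s) (fun _ _ => ConvexOn.add) (convexOn_const (0 : β) hs) hf

end

theorem convexOn_max_zero_of_affine {f : ℝ → ℝ} (a b : ℝ) (hf : ∀ x, f x = a * x + b) :
    ConvexOn ℝ univ fun x => max 0 (f x) := by
  have hf_convex : ConvexOn ℝ univ f :=
    ⟨convex_univ, fun x _ y _ p q _ _ hpq => by
      simp only [hf, smul_eq_mul]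
      exact le_of_eq (by linear_combination (-b) * hpq)⟩
  exact (convexOn_const 0 convex_univ).sup hf_convex

theorem convexOn_earliness_tardiness_penalty {ι : Type*} (t : Finset ι) (α β c : ι → ℝ)
    (hα : ∀ i, 0 ≤ α i) (hβ : ∀ i, 0 ≤ β i) (D : ℝ) :
    ConvexOn ℝ univ fun s =>
      ∑ i ∈ t, (α i * max 0 (D - (s + c i)) + β i * max 0 (s + c i - D)) := by
  refine convexOn_sum t convex_univ fun i _ => ConvexOn.add ?_ ?_
  · exact (convexOn_max_zero_of_affine (-1) (D - c i) fun s => by ring).smul (hα i)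
  · exact (convexOn_max_zero_of_affine 1 (c i - D) fun s => by ring).smul (hβ i)

theorem stmt_5_general (n : ℕ) (P α β : Fin n → ℝ) (D : ℝ)
    (hα : ∀ i, 0 ≤ α i) (hβ : ∀ i, 0 ≤ β i)
    (C : Fin n → ℝ → ℝ)
    (hC : ∀ i s, C i s = s + ∑ k ∈ Finset.Iic i, P k)
    (F : ℝ → ℝ)
    (hF : ∀ s, F s = ∑ i, (α i * max 0 (D - C i s) + β i * max 0 (C i s - D)))
    (t s' s : ℝ) (hts' : t < s') (hs's : s' < s) (hFs : F s < F s') :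
    F s' < F t := by
  have hF_convex : ConvexOn ℝ univ F := by
    convert convexOn_earliness_tardiness_penalty Finset.univ α β
      (fun i => ∑ k ∈ Finset.Iic i, P k) hα hβ D using 1
    exact funext fun s => by simp only [hF, hC]
  refine hF_convex.lt_left_of_right_lt (mem_univ t) (mem_univ s) ?_ hFs
  rw [openSegment_eq_Ioo (hts'.trans hs's)]
  exact ⟨hts', hs's⟩

theorem stmt_5 (n : ℕ) (P α β : Fin n → ℝ) (D : ℝ)
    (hP : ∀ i, 0 < P i) (hα : ∀ i, 0 ≤ α i) (hβ : ∀ i, 0 ≤ β i)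
    (C : Fin n → ℝ → ℝ)
    (hC : ∀ i s, C i s = s + ∑ k ∈ Finset.Iic i, P k)
    (F : ℝ → ℝ)
    (hF : ∀ s, F s = ∑ i, (α i * max 0 (D - C i s) + β i * max 0 (C i s - D)))
    (t s' s : ℝ) (hts' : t < s') (hs's : s' < s) (hFs : F s < F s') :
    F s' < F t :=
  stmt_5_general n P α β D hα hβ C hC F hF t s' s hts' hs's hFs
end

section
/- (Structure of an optimal schedule; core of Theorem 1.) Assume n ≥ 1, α i ≥ 0 and β i ≥ 0 for all i ∈ Fin n, and P 0 ≤ D. Then there exists s* ∈ [0, D - P 0] minimizing F over the interval [0, D - P 0] (i.e. F s* ≤ F s for all s ∈ [0, D - P 0]) such that either s* = 0 (the first job starts at time 0) or there exists i ∈ Fin n with C i s* = D (some job completes exactly at the due date). -/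
/-!
The penalty `F` is piecewise affine, with kinks only at the offsets `s` where some job completes
exactly at `D`; the right end `D - P 0` of the interval is such a kink (job `0` finishes there).
Take the least minimizer `s` of `F` on `[0, D - P 0]`, which exists because the set of minimizers
is compact. If `s` were neither `0` nor a kink, `F` would be affine near `s`, so
`F (s - ε) + F (s + ε) = 2 F s` for small `ε > 0`; minimality then forces `F (s - ε) = F s`,
contradicting the choice of `s` as the least minimizer.
-/

open Set Filter Topology

theorem IsCompact.exists_isLeast_argmin {α β : Type*} [LinearOrder α] [TopologicalSpace α]
    [OrderClosedTopology α] [LinearOrder β] [TopologicalSpace β] [ClosedIicTopology β]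
    {K : Set α} {f : α → β} (hK : IsCompact K) (hne : K.Nonempty) (hf : ContinuousOn f K) :
    ∃ s, IsLeast {t ∈ K | IsMinOn f K t} s := by
  obtain ⟨t, htK, ht⟩ := hK.exists_isMinOn hne hf
  have hargmin : {t ∈ K | IsMinOn f K t} = K ∩ f ⁻¹' Iic (f t) := by
    ext x
    exact and_congr_right fun _ => ⟨fun hx => hx htK, fun hx _ hy => hx.trans (ht hy)⟩
  rw [hargmin]
  exact (hK.of_isClosed_subset (hf.preimage_isClosed_of_isClosed hK.isClosed isClosed_Iic)
    inter_subset_left).exists_isLeast ⟨t, htK, le_rfl⟩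

theorem IsLeast.not_eventually_midpoint_eq {f : ℝ → ℝ} {K : Set ℝ} {s : ℝ}
    (hs : IsLeast {t ∈ K | IsMinOn f K t} s) (hK : K ∈ 𝓝 s) :
    ¬ ∀ᶠ ε in 𝓝 0, f (s - ε) + f (s + ε) = 2 * f s := by
  intro hmid
  have hshift : ∀ᶠ ε in 𝓝 (0 : ℝ), s - ε ∈ K ∧ s + ε ∈ K :=
    ((continuous_sub_left s).tendsto' 0 s (sub_zero s)).eventually hK |>.and
      (((continuous_const_add s).tendsto' 0 s (add_zero s)).eventually hK)
  obtain ⟨ε, ⟨hεmid, hleft, hright⟩, hε⟩ :=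
    (((hmid.and hshift).filter_mono nhdsWithin_le_nhds).and self_mem_nhdsWithin).exists
      (f := 𝓝[>] (0 : ℝ))
  have hlt : f s < f (s - ε) := by
    by_contra! hle
    have : s ≤ s - ε := hs.2 ⟨hleft, fun x hx => hle.trans (hs.1.2 hx)⟩
    linarith [show (0 : ℝ) < ε from hε]
  have hle : f s ≤ f (s + ε) := hs.1.2 hright
  linarith

theorem max_zero_sub_add_max_zero_add {x ε : ℝ} (h : |ε| ≤ |x|) :
    max 0 (x - ε) + max 0 (x + ε) = 2 * max 0 x := by
  rcases le_total 0 x with hx | hx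
  · rw [abs_of_nonneg hx] at h
    have := abs_le.1 h
    rw [max_eq_right (by linarith), max_eq_right (by linarith), max_eq_right hx]; ring
  · rw [abs_of_nonpos hx] at h
    have := abs_le.1 h
    rw [max_eq_left (by linarith), max_eq_left (by linarith), max_eq_left hx]; ring

section Penalty

variable {ι : Type*} [Fintype ι] (α β c : ι → ℝ) (D : ℝ)

def penalty (s : ℝ) : ℝ :=
  ∑ i, (α i * max 0 (D - (s + c i)) + β i * max 0 (s + c i - D))

theorem continuous_penalty : Continuous (penalty α β c D) := by
  unfold penalty; fun_prop

theorem penalty_sub_add_penalty_add {s ε : ℝ} (h : ∀ i, |ε| ≤ |s + c i - D|) :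
    penalty α β c D (s - ε) + penalty α β c D (s + ε) = 2 * penalty α β c D s := by
  simp only [penalty, ← Finset.sum_add_distrib, Finset.mul_sum]
  refine Finset.sum_congr rfl fun i _ => ?_
  have hearly := max_zero_sub_add_max_zero_add (x := D - (s + c i)) (ε := ε)
    (by rw [abs_sub_comm]; exact h i)
  have htardy := max_zero_sub_add_max_zero_add (h i)
  rw [show D - (s - ε + c i) = D - (s + c i) + ε by ring,
    show D - (s + ε + c i) = D - (s + c i) - ε by ring,
    show s - ε + c i - D = s + c i - D - ε by ring,
    show s + ε + c i - D = s + c i - D + ε by ring]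
  linear_combination α i * hearly + β i * htardy

theorem eventually_penalty_midpoint_eq {s : ℝ} (h : ∀ i, s + c i ≠ D) :
    ∀ᶠ ε in 𝓝 0,
      penalty α β c D (s - ε) + penalty α β c D (s + ε) = 2 * penalty α β c D s := by
  refine (eventually_all.2 fun i => ?_).mono fun ε => penalty_sub_add_penalty_add α β c D
  have hpos : 0 < |s + c i - D| := abs_pos.2 (sub_ne_zero.2 (h i))
  simpa using
    (continuous_abs.tendsto (0 : ℝ)).eventually (eventually_le_nhds (by simpa using hpos))

end Penalty

theorem stmt_6_general (n : ℕ) (hn : 0 < n) (P α β : Fin n → ℝ) (D : ℝ)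
    (hP0 : P ⟨0, hn⟩ ≤ D)
    (C : Fin n → ℝ → ℝ)
    (hC : ∀ i s, C i s = s + ∑ k ∈ Finset.Iic i, P k)
    (F : ℝ → ℝ)
    (hF : ∀ s, F s = ∑ i, (α i * max 0 (D - C i s) + β i * max 0 (C i s - D))) :
    ∃ sStar ∈ Set.Icc (0 : ℝ) (D - P ⟨0, hn⟩),
      (∀ s ∈ Set.Icc (0 : ℝ) (D - P ⟨0, hn⟩), F sStar ≤ F s) ∧
      (sStar = 0 ∨ ∃ i : Fin n, C i sStar = D) := by
  set c : Fin n → ℝ := fun i => ∑ k ∈ Finset.Iic i, P k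
  have hFc : F = penalty α β c D := funext fun s => by simp only [hF, hC, penalty, c]
  have hlast : C ⟨0, hn⟩ (D - P ⟨0, hn⟩) = D := by
    rw [hC,
      show Finset.Iic (⟨0, hn⟩ : Fin n) = {⟨0, hn⟩} by ext; simp [Fin.le_def, Fin.ext_iff],
      Finset.sum_singleton, sub_add_cancel]
  obtain ⟨s, ⟨hsK, hsmin⟩, hleast⟩ := isCompact_Icc.exists_isLeast_argmin
    (nonempty_Icc.2 (sub_nonneg.2 hP0)) (continuous_penalty α β c D).continuousOn
  refine ⟨s, hsK, fun t ht => hFc ▸ hsmin ht, ?_⟩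
  by_contra! ⟨hs0, hsC⟩
  have hsD : ∀ i, s + c i ≠ D := fun i => hC i s ▸ hsC i
  have hsK' : Icc 0 (D - P ⟨0, hn⟩) ∈ 𝓝 s :=
    Icc_mem_nhds (hsK.1.lt_of_ne' hs0) (hsK.2.lt_of_ne fun h => hsC _ (h ▸ hlast))
  exact IsLeast.not_eventually_midpoint_eq ⟨⟨hsK, hsmin⟩, hleast⟩ hsK'
    (eventually_penalty_midpoint_eq α β c D hsD)

theorem stmt_6 (n : ℕ) (hn : 0 < n) (P α β : Fin n → ℝ) (D : ℝ)
    (hP : ∀ i, 0 < P i) (hα : ∀ i, 0 ≤ α i) (hβ : ∀ i, 0 ≤ β i)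
    (hP0 : P ⟨0, hn⟩ ≤ D)
    (C : Fin n → ℝ → ℝ)
    (hC : ∀ i s, C i s = s + ∑ k ∈ Finset.Iic i, P k)
    (F : ℝ → ℝ)
    (hF : ∀ s, F s = ∑ i, (α i * max 0 (D - C i s) + β i * max 0 (C i s - D))) :
    ∃ sStar ∈ Set.Icc (0 : ℝ) (D - P ⟨0, hn⟩),
      (∀ s ∈ Set.Icc (0 : ℝ) (D - P ⟨0, hn⟩), F sStar ≤ F s) ∧
      (sStar = 0 ∨ ∃ i : Fin n, C i sStar = D) :=
  stmt_6_general n hn P α β D hP0 C hC F hF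
end

section
/- (A full left shift to the next breakpoint is at least as good as any partial shift; used in the proof of Theorem 1.) Let a ≤ b be real numbers and assume that for every job i ∈ Fin n either C i s ≤ D for all s ∈ [a, b] or C i s ≥ D for all s ∈ [a, b]. If c satisfies a ≤ c < b and F c < F b (a partial left shift from offset b to offset c strictly improves the total penalty), then F a ≤ F c: shifting all the way left to offset a yields a total penalty at least as small. -/
/-!
On `[a, b]` every job stays on one side of the due date, so each penalty term, and hence the
total penalty `F`, is an affine function of the offset there. An affine function that strictly
decreases from `b` to `c < b` has positive slope, so it decreases further on the way down to `a`.
-/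

open Set

def AffineOn (S : Set ℝ) (f : ℝ → ℝ) : Prop :=
  ∃ w k : ℝ, ∀ x ∈ S, f x = w * x + k

namespace AffineOn

variable {S : Set ℝ}

theorem sum {ι : Type*} (t : Finset ι) {g : ι → ℝ → ℝ} (hg : ∀ i, AffineOn S (g i)) :
    AffineOn S fun x => ∑ i ∈ t, g i x := by
  choose w k hwk using hg
  refine ⟨∑ i ∈ t, w i, ∑ i ∈ t, k i, fun x hx => ?_⟩
  simp only [hwk _ x hx, Finset.sum_add_distrib, Finset.sum_mul]

theorem penalty {g : ℝ → ℝ} (hg : AffineOn S g) (α β D : ℝ)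
    (hside : (∀ x ∈ S, g x ≤ D) ∨ (∀ x ∈ S, D ≤ g x)) :
    AffineOn S fun x => α * max 0 (D - g x) + β * max 0 (g x - D) := by
  obtain ⟨w, k, hwk⟩ := hg
  rcases hside with early | tardy
  · refine ⟨-α * w, α * (D - k), fun x hx => ?_⟩
    dsimp only
    rw [max_eq_right (sub_nonneg.2 (early x hx)), max_eq_left (sub_nonpos.2 (early x hx)),
      hwk x hx]
    ring
  · refine ⟨β * w, β * (k - D), fun x hx => ?_⟩
    dsimp only
    rw [max_eq_left (sub_nonpos.2 (tardy x hx)), max_eq_right (sub_nonneg.2 (tardy x hx)),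
      hwk x hx]
    ring

theorem monotoneOn_of_lt {f : ℝ → ℝ} (hf : AffineOn S f) {b c : ℝ} (hc : c ∈ S) (hb : b ∈ S)
    (hcb : c < b) (himp : f c < f b) : MonotoneOn f S := by
  obtain ⟨w, k, hwk⟩ := hf
  have hw : 0 < w := by
    rw [hwk c hc, hwk b hb] at himp
    nlinarith
  intro x hx y hy hxy
  rw [hwk x hx, hwk y hy]
  gcongr

end AffineOn

theorem stmt_8_general (n : ℕ) (P α β : Fin n → ℝ) (D : ℝ)
    (C : Fin n → ℝ → ℝ)
    (hC : ∀ i s, C i s = s + ∑ k ∈ Finset.Iic i, P k)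
    (F : ℝ → ℝ)
    (hF : ∀ s, F s = ∑ i, (α i * max 0 (D - C i s) + β i * max 0 (C i s - D)))
    (a b : ℝ)
    (hside : ∀ i : Fin n, (∀ s ∈ Set.Icc a b, C i s ≤ D) ∨ (∀ s ∈ Set.Icc a b, C i s ≥ D))
    (c : ℝ) (hac : a ≤ c) (hcb : c < b) (himp : F c < F b) :
    F a ≤ F c := by
  have hCaff : ∀ i, AffineOn (Icc a b) (C i) := fun i =>
    ⟨1, ∑ k ∈ Finset.Iic i, P k, fun s _ => by rw [hC, one_mul]⟩
  have hFaff : AffineOn (Icc a b) F := by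
    rw [show F = _ from funext hF]
    exact AffineOn.sum _ fun i => (hCaff i).penalty (α i) (β i) D (hside i)
  have ha : a ∈ Icc a b := ⟨le_rfl, hac.trans hcb.le⟩
  have hb : b ∈ Icc a b := ⟨hac.trans hcb.le, le_rfl⟩
  have hc : c ∈ Icc a b := ⟨hac, hcb.le⟩
  exact hFaff.monotoneOn_of_lt hc hb hcb himp ha hc hac

theorem stmt_8 (n : ℕ) (P α β : Fin n → ℝ) (D : ℝ)
    (hP : ∀ i, 0 < P i)
    (C : Fin n → ℝ → ℝ)
    (hC : ∀ i s, C i s = s + ∑ k ∈ Finset.Iic i, P k)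
    (F : ℝ → ℝ)
    (hF : ∀ s, F s = ∑ i, (α i * max 0 (D - C i s) + β i * max 0 (C i s - D)))
    (a b : ℝ) (hab : a ≤ b)
    (hside : ∀ i : Fin n, (∀ s ∈ Set.Icc a b, C i s ≤ D) ∨ (∀ s ∈ Set.Icc a b, C i s ≥ D))
    (c : ℝ) (hac : a ≤ c) (hcb : c < b) (himp : F c < F b) :
    F a ≤ F c :=
  stmt_8_general n P α β D C hC F hF a b hside c hac hcb himp
end

section
/- (Dynamic case: a right shift of the extended schedule cannot improve it.) Let U ≥ 0 and let s₀ ∈ [0, U] be an offset minimizing F over [0, U], i.e. F s₀ ≤ F s for all s ∈ [0, U]. Assume every new job is tardy or on time at offset s₀, i.e. C' j s₀ ≥ D for all j ∈ Fin n'. Then for every x ≥ 0 with s₀ + x ≤ U one has G s₀ ≤ G (s₀ + x): increasing all completion times of the extended job sequence cannot decrease the extended total penalty. -/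
theorem monotone_sum_mul_tardiness {ι : Type*} (s : Finset ι) {w : ι → ℝ}
    (hw : ∀ i ∈ s, 0 ≤ w i) (c : ι → ℝ) (D : ℝ) :
    Monotone fun t => ∑ i ∈ s, w i * max 0 (t + c i - D) := fun _ _ hab =>
  Finset.sum_le_sum fun i hi =>
    mul_le_mul_of_nonneg_left (max_le_max le_rfl (by linarith)) (hw i hi)

theorem stmt_9_general (n : ℕ) (P : Fin n → ℝ) (D : ℝ)
    (F : ℝ → ℝ)
    (n' : ℕ) (Q β' : Fin n' → ℝ)
    (hβ' : ∀ j, 0 ≤ β' j)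
    (C' : Fin n' → ℝ → ℝ)
    (hC' : ∀ j s, C' j s = s + ∑ k, P k + ∑ l ∈ Finset.Iic j, Q l)
    (G : ℝ → ℝ)
    (hG : ∀ s, G s = F s + ∑ j, β' j * max 0 (C' j s - D))
    (U : ℝ)
    (s₀ : ℝ) (hs₀ : s₀ ∈ Set.Icc (0 : ℝ) U)
    (hmin : ∀ s ∈ Set.Icc (0 : ℝ) U, F s₀ ≤ F s)
    (x : ℝ) (hx : 0 ≤ x) (hxU : s₀ + x ≤ U) :
    G s₀ ≤ G (s₀ + x) := by
  have hF : F s₀ ≤ F (s₀ + x) := hmin _ ⟨by linarith [hs₀.1], hxU⟩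
  have htardiness := monotone_sum_mul_tardiness Finset.univ (fun j _ => hβ' j)
    (fun j => ∑ k, P k + ∑ l ∈ Finset.Iic j, Q l) D (le_add_of_nonneg_right hx : s₀ ≤ s₀ + x)
  simp only [hG, hC', add_assoc] at htardiness ⊢
  exact add_le_add hF htardiness

theorem stmt_9 (n : ℕ) (P α β : Fin n → ℝ) (D : ℝ)
    (hP : ∀ i, 0 < P i)
    (C : Fin n → ℝ → ℝ)
    (hC : ∀ i s, C i s = s + ∑ k ∈ Finset.Iic i, P k)
    (F : ℝ → ℝ)
    (hF : ∀ s, F s = ∑ i, (α i * max 0 (D - C i s) + β i * max 0 (C i s - D)))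
    (n' : ℕ) (Q β' : Fin n' → ℝ)
    (hQ : ∀ j, 0 < Q j) (hβ' : ∀ j, 0 ≤ β' j)
    (C' : Fin n' → ℝ → ℝ)
    (hC' : ∀ j s, C' j s = s + ∑ k, P k + ∑ l ∈ Finset.Iic j, Q l)
    (G : ℝ → ℝ)
    (hG : ∀ s, G s = F s + ∑ j, β' j * max 0 (C' j s - D))
    (U : ℝ) (hU : 0 ≤ U)
    (s₀ : ℝ) (hs₀ : s₀ ∈ Set.Icc (0 : ℝ) U)
    (hmin : ∀ s ∈ Set.Icc (0 : ℝ) U, F s₀ ≤ F s)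
    (htardy : ∀ j : Fin n', C' j s₀ ≥ D)
    (x : ℝ) (hx : 0 ≤ x) (hxU : s₀ + x ≤ U) :
    G s₀ ≤ G (s₀ + x) :=
  stmt_9_general n P D F n' Q β' hβ' C' hC' G hG U s₀ hs₀ hmin x hx hxU
end

section
/- (Lemma 4: the optimal extended schedule is obtained by reducing all completion times by a common amount γ ≥ 0.) Let U ≥ 0 and let s₀ ∈ [0, U] be an offset minimizing F over [0, U], i.e. F s₀ ≤ F s for all s ∈ [0, U]. Assume α i ≥ 0 and β i ≥ 0 for all i ∈ Fin n, and that every new job is tardy or on time at offset s₀, i.e. C' j s₀ ≥ D for all j ∈ Fin n'. Then there exists s* ∈ [0, s₀] minimizing the extended penalty G over all of [0, U]: G s* ≤ G s for every s ∈ [0, U]. Equivalently, there exists γ ≥ 0 with s* = s₀ - γ, so the optimum for the extended sequence is achieved by uniformly reducing (never increasing) the completion times of the original jobs by γ, the new jobs following compactly. -/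
/-!
Minimise the continuous penalty `G` over the compact interval `[0, s₀]`. No offset `s > s₀` can do
better: `F s₀ ≤ F s` because `s₀` minimises `F`, and the tardiness penalty of the appended jobs is
nondecreasing in the offset.
-/

open Set Finset

theorem exists_mem_Icc_isMinOn_of_le_right {α β : Type*} [LinearOrder α] [TopologicalSpace α]
    [CompactIccSpace α] [LinearOrder β] [TopologicalSpace β] [ClosedIicTopology β]
    {f : α → β} {a b c : α} (hab : a ≤ b) (hf : ContinuousOn f (Icc a b))
    (hright : ∀ x ∈ Ioc b c, f b ≤ f x) :
    ∃ x ∈ Icc a b, IsMinOn f (Icc a c) x := by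
  obtain ⟨x, hx, hxmin⟩ := isCompact_Icc.exists_isMinOn (nonempty_Icc.2 hab) hf
  refine ⟨x, hx, fun y hy => ?_⟩
  rcases le_or_gt y b with hyb | hby
  · exact hxmin ⟨hy.1, hyb⟩
  · exact (hxmin (right_mem_Icc.2 hab)).trans (hright y ⟨hby, hy.2⟩)

theorem monotone_sum_mul_max_zero_sub {ι : Type*} (t : Finset ι) {w : ι → ℝ}
    (hw : ∀ j ∈ t, 0 ≤ w j) {C : ι → ℝ → ℝ} (hC : ∀ j ∈ t, Monotone (C j)) (D : ℝ) :
    Monotone fun s => ∑ j ∈ t, w j * max 0 (C j s - D) := fun _ _ hst =>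
  Finset.sum_le_sum fun j hj =>
    mul_le_mul_of_nonneg_left (max_le_max le_rfl (sub_le_sub_right (hC j hj hst) D)) (hw j hj)

theorem stmt_10_general (n : ℕ) (P α β : Fin n → ℝ) (D : ℝ)
    (C : Fin n → ℝ → ℝ)
    (hC : ∀ i s, C i s = s + ∑ k ∈ Finset.Iic i, P k)
    (F : ℝ → ℝ)
    (hF : ∀ s, F s = ∑ i, (α i * max 0 (D - C i s) + β i * max 0 (C i s - D)))
    (n' : ℕ) (Q β' : Fin n' → ℝ)
    (hβ' : ∀ j, 0 ≤ β' j)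
    (C' : Fin n' → ℝ → ℝ)
    (hC' : ∀ j s, C' j s = s + ∑ k, P k + ∑ l ∈ Finset.Iic j, Q l)
    (G : ℝ → ℝ)
    (hG : ∀ s, G s = F s + ∑ j, β' j * max 0 (C' j s - D))
    (U : ℝ)
    (s₀ : ℝ) (hs₀ : s₀ ∈ Set.Icc (0 : ℝ) U)
    (hmin : ∀ s ∈ Set.Icc (0 : ℝ) U, F s₀ ≤ F s) :
    ∃ sStar ∈ Set.Icc (0 : ℝ) s₀, ∀ s ∈ Set.Icc (0 : ℝ) U, G sStar ≤ G s := by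
  obtain ⟨hs₀0, -⟩ := hs₀
  have hGc : Continuous G := by
    simp only [funext hG, funext hF, hC, hC']
    fun_prop
  have hC'mono : ∀ j, Monotone (C' j) := fun j s t hst => by
    simp only [hC']
    linarith
  have hright : ∀ s ∈ Ioc s₀ U, G s₀ ≤ G s := fun s hs => by
    rw [hG, hG]
    exact add_le_add (hmin s ⟨hs₀0.trans hs.1.le, hs.2⟩)
      (monotone_sum_mul_max_zero_sub _ (fun j _ => hβ' j) (fun j _ => hC'mono j) D hs.1.le)
  obtain ⟨sStar, hsStar, hGmin⟩ :=
    exists_mem_Icc_isMinOn_of_le_right hs₀0 hGc.continuousOn hright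
  exact ⟨sStar, hsStar, isMinOn_iff.1 hGmin⟩

theorem stmt_10 (n : ℕ) (P α β : Fin n → ℝ) (D : ℝ)
    (hP : ∀ i, 0 < P i) (hα : ∀ i, 0 ≤ α i) (hβ : ∀ i, 0 ≤ β i)
    (C : Fin n → ℝ → ℝ)
    (hC : ∀ i s, C i s = s + ∑ k ∈ Finset.Iic i, P k)
    (F : ℝ → ℝ)
    (hF : ∀ s, F s = ∑ i, (α i * max 0 (D - C i s) + β i * max 0 (C i s - D)))
    (n' : ℕ) (Q β' : Fin n' → ℝ)
    (hQ : ∀ j, 0 < Q j) (hβ' : ∀ j, 0 ≤ β' j)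
    (C' : Fin n' → ℝ → ℝ)
    (hC' : ∀ j s, C' j s = s + ∑ k, P k + ∑ l ∈ Finset.Iic j, Q l)
    (G : ℝ → ℝ)
    (hG : ∀ s, G s = F s + ∑ j, β' j * max 0 (C' j s - D))
    (U : ℝ) (hU : 0 ≤ U)
    (s₀ : ℝ) (hs₀ : s₀ ∈ Set.Icc (0 : ℝ) U)
    (hmin : ∀ s ∈ Set.Icc (0 : ℝ) U, F s₀ ≤ F s)
    (htardy : ∀ j : Fin n', C' j s₀ ≥ D) :
    ∃ sStar ∈ Set.Icc (0 : ℝ) s₀, ∀ s ∈ Set.Icc (0 : ℝ) U, G sStar ≤ G s :=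
  stmt_10_general n P α β D C hC F hF n' Q β' hβ' C' hC' G hG U s₀ hs₀ hmin
end
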